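/- Impossibility theorem, part 2 (Features 1 and 3 exclude Feature 2): Let H_W and H_S be Hermitian matrices on ℂ^{d_W} and ℂ^{d_S}, kT > 0, and let {φ_x}_{x∈X} (|X| = d_S) be an orthonormal basis of ℂ^{d_S} consisting of eigenvectors of H_S. For each x ∈ X let U_x be a unitary on ℂ^{d_W} ⊗ ℂ^{d_S} with [U_x, H_W ⊗ 1 + 1 ⊗ H_S] = 0, let ρ_W be a density matrix on ℂ^{d_W}, set ρ'_{W,x} := tr₂[U_x(ρ_W ⊗ |φ_x⟩⟨φ_x|)U_x†] and W_x := F_{H_W}(ρ'_{W,x}) − F_{H_W}(ρ_W). If W_x > 0 for all x ∈ X, then there exists x ∈ X with S(ρ'_{W,x}) < S(ρ_W). -/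

import Mathlib

open Matrix
open scoped Kronecker Matrix ComplexOrder

noncomputable section

/-- A density matrix: positive semidefinite with unit trace. -/
def IsDensityMatrix {n : Type*} [Fintype n] (ρ : Matrix n n ℂ) : Prop :=
  ρ.PosSemidef ∧ ρ.trace = 1

/-- von Neumann entropy `S(ρ) = -∑ λᵢ log λᵢ` (junk value 0 if not Hermitian). -/
noncomputable def vnEntropy {n : Type*} [Fintype n] [DecidableEq n]
    (ρ : Matrix n n ℂ) : ℝ :=
  if h : ρ.IsHermitian then -∑ i, (h.eigenvalues i) * Real.log (h.eigenvalues i) else 0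

/-- Non-equilibrium free energy `F(ρ) = tr(Hρ) - kT S(ρ)`. -/
noncomputable def freeEnergy {n : Type*} [Fintype n] [DecidableEq n]
    (kT : ℝ) (H ρ : Matrix n n ℂ) : ℝ :=
  (Matrix.trace (H * ρ)).re - kT * vnEntropy ρ

/-- Least eigenvalue of a Hermitian matrix (junk value 0 if not Hermitian). -/
noncomputable def lambdaMin {n : Type*} [Fintype n] [DecidableEq n]
    (H : Matrix n n ℂ) : ℝ :=
  if h : H.IsHermitian then ⨅ i, h.eigenvalues i else 0

/-- Partial trace over the second tensor factor. -/
def ptrace2 {m n : Type*} [Fintype n]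
    (σ : Matrix (m × n) (m × n) ℂ) : Matrix m m ℂ :=
  fun i j => ∑ k, σ (i, k) (j, k)

/-- Partial trace over the first tensor factor. -/
def ptrace1 {m n : Type*} [Fintype m]
    (σ : Matrix (m × n) (m × n) ℂ) : Matrix n n ℂ :=
  fun k l => ∑ i, σ (i, k) (i, l)

/-- Outer product `|v⟩⟨v|`. -/
def outer {n : Type*} (v : n → ℂ) : Matrix n n ℂ :=
  Matrix.vecMulVec v (star v)

/-- Kronecker product of vectors. -/
def kronVec {m n : Type*} (v : m → ℂ) (w : n → ℂ) : m × n → ℂ :=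
  fun p => v p.1 * w p.2

/-!
Let `x₀` label a ground state of `H_S`. The global energy is conserved by `U_{x₀}`, and the
system, which starts in its ground state, can only gain energy; hence the weight's energy does not
increase. A strictly positive free-energy gain `W_{x₀}` then forces the weight's entropy to drop.
-/

namespace Matrix

variable {m n : Type*} [Fintype m] [Fintype n]

theorem trace_kronecker_one_mul [DecidableEq n] (A : Matrix m m ℂ)
    (σ : Matrix (m × n) (m × n) ℂ) :
    trace ((A ⊗ₖ (1 : Matrix n n ℂ)) * σ) = trace (A * ptrace2 σ) := by
  simp only [trace, diag_apply, mul_apply, kroneckerMap_apply, one_apply, mul_ite, mul_one,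
    mul_zero, ite_mul, zero_mul, Fintype.sum_prod_type, Finset.sum_ite_eq, Finset.mem_univ,
    ↓reduceIte, ptrace2, Finset.mul_sum]
  exact Finset.sum_congr rfl fun _ _ => Finset.sum_comm

theorem trace_one_kronecker_mul [DecidableEq m] (B : Matrix n n ℂ)
    (σ : Matrix (m × n) (m × n) ℂ) :
    trace (((1 : Matrix m m ℂ) ⊗ₖ B) * σ) = trace (B * ptrace1 σ) := by
  simp only [trace, diag_apply, mul_apply, kroneckerMap_apply, one_apply, ite_mul, one_mul,
    zero_mul, Fintype.sum_prod_type, Finset.sum_ite_irrel, Finset.sum_const_zero,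
    Finset.sum_ite_eq, Finset.mem_univ, ↓reduceIte, ptrace1, Finset.mul_sum]
  rw [Finset.sum_comm]
  exact Finset.sum_congr rfl fun _ _ => Finset.sum_comm

theorem trace_kronecker_add_mul [DecidableEq m] [DecidableEq n] (A : Matrix m m ℂ)
    (B : Matrix n n ℂ) (σ : Matrix (m × n) (m × n) ℂ) :
    trace ((A ⊗ₖ (1 : Matrix n n ℂ) + (1 : Matrix m m ℂ) ⊗ₖ B) * σ)
      = trace (A * ptrace2 σ) + trace (B * ptrace1 σ) := by
  rw [add_mul, trace_add, trace_kronecker_one_mul, trace_one_kronecker_mul]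

omit [Fintype m] in
theorem ptrace2_kronecker (A : Matrix m m ℂ) (B : Matrix n n ℂ) :
    ptrace2 (A ⊗ₖ B) = trace B • A := by
  ext i j
  simp [ptrace2, trace, Finset.mul_sum, mul_comm]

omit [Fintype n] in
theorem ptrace1_kronecker (A : Matrix m m ℂ) (B : Matrix n n ℂ) :
    ptrace1 (A ⊗ₖ B) = trace A • B := by
  ext k l
  simp [ptrace1, trace, Finset.sum_mul]

omit [Fintype n] in
theorem ptrace1_eq_sum_submatrix (σ : Matrix (m × n) (m × n) ℂ) :
    ptrace1 σ = ∑ i, σ.submatrix (Prod.mk i) (Prod.mk i) := by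
  ext k l
  simp [ptrace1, sum_apply]

theorem trace_ptrace1 (σ : Matrix (m × n) (m × n) ℂ) : trace (ptrace1 σ) = trace σ := by
  simp only [trace, diag, ptrace1, Fintype.sum_prod_type]
  exact Finset.sum_comm

theorem trace_mul_conj_unitary_of_commute [DecidableEq n] {U H : Matrix n n ℂ}
    (hU : U ∈ unitaryGroup n ℂ) (hUH : Commute U H) (σ : Matrix n n ℂ) :
    trace (H * (U * σ * Uᴴ)) = trace (H * σ) := by
  have hUU : Uᴴ * U = 1 := by simpa [star_eq_conjTranspose] using hU.1
  rw [← Matrix.mul_assoc, ← Matrix.mul_assoc, ← hUH.eq, trace_mul_comm, ← Matrix.mul_assoc,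
    ← Matrix.mul_assoc, hUU, Matrix.one_mul]

theorem trace_mul_outer (A : Matrix n n ℂ) (v : n → ℂ) :
    trace (A * outer v) = star v ⬝ᵥ A *ᵥ v := by
  simp only [outer, trace, diag, mul_apply, vecMulVec_apply, dotProduct, mulVec,
    Pi.star_apply, Finset.mul_sum]
  exact Finset.sum_congr rfl fun _ _ => Finset.sum_congr rfl fun _ _ => by ring

theorem sum_outer_eq_one [DecidableEq n] {X : Type*} [Fintype X] [DecidableEq X]
    {φ : X → n → ℂ} (hcard : Fintype.card X = Fintype.card n)
    (hφ : ∀ x y, star (φ x) ⬝ᵥ φ y = if x = y then 1 else 0) :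
    ∑ x, outer (φ x) = 1 := by
  set V : Matrix n X ℂ := of fun i x => φ x i
  have hVV : Vᴴ * V = 1 := by
    ext x y
    simpa [V, mul_apply, one_apply, dotProduct] using hφ x y
  have hVV' : V * Vᴴ = 1 := (mul_eq_one_comm_of_card_eq X n ℂ hcard).mp hVV
  ext i j
  simpa [V, mul_apply, outer, sum_apply, vecMulVec_apply] using congrFun (congrFun hVV' i) j

theorem eq_sum_smul_outer_of_eigenbasis [DecidableEq n] {X : Type*} [Fintype X] [DecidableEq X]
    {H : Matrix n n ℂ} {φ : X → n → ℂ} {μ : X → ℝ} (hcard : Fintype.card X = Fintype.card n)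
    (hφ : ∀ x y, star (φ x) ⬝ᵥ φ y = if x = y then 1 else 0)
    (hμ : ∀ x, H *ᵥ φ x = (μ x : ℂ) • φ x) :
    H = ∑ x, (μ x : ℂ) • outer (φ x) := by
  conv_lhs => rw [← H.mul_one, ← sum_outer_eq_one hcard hφ, Finset.mul_sum]
  refine Finset.sum_congr rfl fun x _ => ?_
  rw [outer, mul_vecMulVec, hμ, smul_vecMulVec]

omit [Fintype n] in
theorem PosSemidef.ptrace1 {σ : Matrix (m × n) (m × n) ℂ} (hσ : σ.PosSemidef) :
    (ptrace1 σ).PosSemidef := by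
  rw [ptrace1_eq_sum_submatrix]
  exact posSemidef_sum _ fun i _ => hσ.submatrix _

open scoped MatrixOrder in
theorem PosSemidef.trace_mul_nonneg {A B : Matrix n n ℂ} (hA : A.PosSemidef)
    (hB : B.PosSemidef) : 0 ≤ trace (A * B) := by
  classical
  obtain ⟨C, rfl⟩ := CStarAlgebra.nonneg_iff_eq_star_mul_self.mp hA.nonneg
  rw [star_eq_conjTranspose, Matrix.mul_assoc, trace_mul_comm]
  exact (hB.mul_mul_conjTranspose_same C).trace_nonneg

end Matrix

open Matrix

namespace IsDensityMatrix

variable {m n : Type*} [Fintype m] [Fintype n]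

theorem kronecker {ρ : Matrix m m ℂ} {τ : Matrix n n ℂ} (hρ : IsDensityMatrix ρ)
    (hτ : IsDensityMatrix τ) : IsDensityMatrix (ρ ⊗ₖ τ) :=
  ⟨hρ.1.kronecker hτ.1, by rw [trace_kronecker, hρ.2, hτ.2, one_mul]⟩

theorem conj_unitary [DecidableEq n] {ρ U : Matrix n n ℂ} (hρ : IsDensityMatrix ρ)
    (hU : U ∈ unitaryGroup n ℂ) : IsDensityMatrix (U * ρ * Uᴴ) := by
  have hUU : Uᴴ * U = 1 := by simpa [star_eq_conjTranspose] using hU.1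
  refine ⟨hρ.1.mul_mul_conjTranspose_same U, ?_⟩
  rw [trace_mul_comm, ← Matrix.mul_assoc, hUU, Matrix.one_mul, hρ.2]

theorem ptrace1 {σ : Matrix (m × n) (m × n) ℂ} (hσ : IsDensityMatrix σ) :
    IsDensityMatrix (ptrace1 σ) :=
  ⟨hσ.1.ptrace1, by rw [trace_ptrace1, hσ.2]⟩

end IsDensityMatrix

theorem isDensityMatrix_outer {n : Type*} [Fintype n] {v : n → ℂ} (hv : star v ⬝ᵥ v = 1) :
    IsDensityMatrix (outer v) := by
  refine ⟨posSemidef_vecMulVec_self_star v, ?_⟩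
  simp [← hv, outer, trace, vecMulVec_apply, dotProduct, mul_comm]

theorem le_re_trace_mul_of_eigenbasis {n X : Type*} [Fintype n] [DecidableEq n] [Fintype X]
    [DecidableEq X] {H τ : Matrix n n ℂ} {φ : X → n → ℂ} {μ : X → ℝ} {c : ℝ}
    (hcard : Fintype.card X = Fintype.card n)
    (hφ : ∀ x y, star (φ x) ⬝ᵥ φ y = if x = y then 1 else 0)
    (hμ : ∀ x, H *ᵥ φ x = (μ x : ℂ) • φ x) (hc : ∀ x, c ≤ μ x) (hτ : IsDensityMatrix τ) :
    c ≤ (trace (H * τ)).re := by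
  have hgap : (H - (c : ℂ) • 1).PosSemidef := by
    rw [eq_sum_smul_outer_of_eigenbasis hcard hφ hμ, ← sum_outer_eq_one hcard hφ,
      Finset.smul_sum, ← Finset.sum_sub_distrib]
    refine posSemidef_sum _ fun x _ => ?_
    rw [← sub_smul, ← Complex.ofReal_sub]
    exact (posSemidef_vecMulVec_self_star _).smul
      (Complex.zero_le_real.mpr (sub_nonneg.mpr (hc x)))
  have h := Complex.nonneg_iff.mp (hgap.trace_mul_nonneg hτ.1)
  rw [sub_mul, trace_sub, smul_mul_assoc, Matrix.one_mul, trace_smul, hτ.2] at h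
  simpa using h.1

theorem features_one_three_exclude_two_general
    {dW dS : ℕ} {X : Type*} [Fintype X] [DecidableEq X]
    (hdS : 0 < dS)
    (HW : Matrix (Fin dW) (Fin dW) ℂ) (HS : Matrix (Fin dS) (Fin dS) ℂ)
    (kT : ℝ) (hkT : 0 < kT)
    (φ : X → (Fin dS → ℂ))
    (hcard : Fintype.card X = dS)
    (hφON : ∀ x y, star (φ x) ⬝ᵥ φ y = if x = y then 1 else 0)
    (hφeig : ∀ x, ∃ μ : ℝ, HS.mulVec (φ x) = (μ : ℂ) • φ x)
    (U : X → Matrix (Fin dW × Fin dS) (Fin dW × Fin dS) ℂ)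
    (hU : ∀ x, U x ∈ Matrix.unitaryGroup (Fin dW × Fin dS) ℂ)
    (hUcomm : ∀ x, U x * (HW ⊗ₖ (1 : Matrix (Fin dS) (Fin dS) ℂ)
        + (1 : Matrix (Fin dW) (Fin dW) ℂ) ⊗ₖ HS)
      = (HW ⊗ₖ (1 : Matrix (Fin dS) (Fin dS) ℂ)
        + (1 : Matrix (Fin dW) (Fin dW) ℂ) ⊗ₖ HS) * U x)
    (ρW : Matrix (Fin dW) (Fin dW) ℂ) (hρW : IsDensityMatrix ρW)
    (hW : ∀ x, 0 < freeEnergy kT HW (ptrace2 (U x * (ρW ⊗ₖ outer (φ x)) * (U x)ᴴ))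
        - freeEnergy kT HW ρW) :
    ∃ x, vnEntropy (ptrace2 (U x * (ρW ⊗ₖ outer (φ x)) * (U x)ᴴ))
        < vnEntropy ρW := by
  by_contra! hS
  choose μ hμ using hφeig
  have : Nonempty X := Fintype.card_pos_iff.mp (hcard ▸ hdS)
  obtain ⟨x₀, hx₀⟩ := Finite.exists_min μ
  set σ := U x₀ * (ρW ⊗ₖ outer (φ x₀)) * (U x₀)ᴴ
  have hφ₀ : star (φ x₀) ⬝ᵥ φ x₀ = 1 := by simpa using hφON x₀ x₀
  have hP := isDensityMatrix_outer hφ₀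
  have henergy : trace (HW * ptrace2 σ) + trace (HS * ptrace1 σ) = trace (HW * ρW) + μ x₀ := by
    rw [← trace_kronecker_add_mul, trace_mul_conj_unitary_of_commute (hU x₀) (hUcomm x₀),
      trace_kronecker_add_mul, ptrace2_kronecker, ptrace1_kronecker, hP.2, hρW.2, one_smul,
      one_smul, trace_mul_outer, hμ, dotProduct_smul, hφ₀, smul_eq_mul, mul_one]
  have hground : μ x₀ ≤ (trace (HS * ptrace1 σ)).re :=
    le_re_trace_mul_of_eigenbasis (by rw [hcard, Fintype.card_fin]) hφON hμ hx₀
      ((hρW.kronecker hP).conj_unitary (hU x₀)).ptrace1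
  have hweight_energy : (trace (HW * ptrace2 σ)).re ≤ (trace (HW * ρW)).re := by
    have h := congrArg Complex.re henergy
    simp only [Complex.add_re, Complex.ofReal_re] at h
    linarith
  have hwork := hW x₀
  rw [freeEnergy, freeEnergy] at hwork
  linarith [mul_le_mul_of_nonneg_left (hS x₀) hkT.le]

/-- Impossibility theorem, part 2: repeatable measurement (Feature 1) plus
strictly positive work extraction for all outcomes (Feature 3) force the
weight's entropy to strictly decrease for some outcome (negating Feature 2). -/
theorem features_one_three_exclude_two
    {dW dS : ℕ} {X : Type*} [Fintype X] [DecidableEq X]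
    (hdS : 0 < dS)
    (HW : Matrix (Fin dW) (Fin dW) ℂ) (HS : Matrix (Fin dS) (Fin dS) ℂ)
    (hHW : HW.IsHermitian) (hHS : HS.IsHermitian)
    (kT : ℝ) (hkT : 0 < kT)
    (φ : X → (Fin dS → ℂ))
    (hcard : Fintype.card X = dS)
    (hφON : ∀ x y, star (φ x) ⬝ᵥ φ y = if x = y then 1 else 0)
    (hφeig : ∀ x, ∃ μ : ℝ, HS.mulVec (φ x) = (μ : ℂ) • φ x)
    (U : X → Matrix (Fin dW × Fin dS) (Fin dW × Fin dS) ℂ)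
    (hU : ∀ x, U x ∈ Matrix.unitaryGroup (Fin dW × Fin dS) ℂ)
    (hUcomm : ∀ x, U x * (HW ⊗ₖ (1 : Matrix (Fin dS) (Fin dS) ℂ)
        + (1 : Matrix (Fin dW) (Fin dW) ℂ) ⊗ₖ HS)
      = (HW ⊗ₖ (1 : Matrix (Fin dS) (Fin dS) ℂ)
        + (1 : Matrix (Fin dW) (Fin dW) ℂ) ⊗ₖ HS) * U x)
    (ρW : Matrix (Fin dW) (Fin dW) ℂ) (hρW : IsDensityMatrix ρW)
    (hW : ∀ x, 0 < freeEnergy kT HW (ptrace2 (U x * (ρW ⊗ₖ outer (φ x)) * (U x)ᴴ))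
        - freeEnergy kT HW ρW) :
    ∃ x, vnEntropy (ptrace2 (U x * (ρW ⊗ₖ outer (φ x)) * (U x)ᴴ))
        < vnEntropy ρW :=
  features_one_three_exclude_two_general hdS HW HS kT hkT φ hcard hφON hφeig U hU hUcomm ρW hρW hW
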